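/- arXiv:2511.13117 — 2 statements merged into one kernel-verified Lean document; each statement's English description precedes it below -/
import Mathlib

section
/- Let the parameter error evolve as ψ̃_{t+1} = (I − γ_tᵀ γ_t) ψ̃_t where γ_t = Γ_t / sqrt(1 + tr(Γ_tᵀ Γ_t)) for some matrix Γ_t. Then the Lyapunov function V_t = ‖ψ̃_t‖² satisfies V_{t+1} − V_t ≤ −‖γ_t ψ̃_t‖² for all t. -/
/-!
With y = γx, the new error is x − γᵀy, so
‖x − γᵀy‖² = ‖x‖² − 2‖y‖² + ‖γᵀy‖², and Cauchy–Schwarz gives ‖γᵀy‖² ≤ ‖γ‖_F² ‖y‖² ≤ ‖y‖²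
because the normalisation makes ‖γ‖_F² = ‖Γ‖_F² / (1 + ‖Γ‖_F²) < 1.
-/

open Matrix

namespace Matrix

theorem trace_mul_transpose_eq_sum_dotProduct {R m n : Type*} [AddCommMonoid R] [Mul R]
    [Fintype m] [Fintype n] (A : Matrix m n R) :
    trace (A * Aᵀ) = ∑ i, A i ⬝ᵥ A i :=
  rfl

section OrderedRing

variable {R m n : Type*} [CommRing R] [LinearOrder R] [IsStrictOrderedRing R]
  [Fintype m] [Fintype n]

theorem dotProduct_self_nonneg (v : n → R) : 0 ≤ v ⬝ᵥ v :=
  Finset.sum_nonneg fun i _ => mul_self_nonneg (v i)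

theorem sq_dotProduct_le (v w : n → R) : (v ⬝ᵥ w) ^ 2 ≤ (v ⬝ᵥ v) * (w ⬝ᵥ w) := by
  simpa only [dotProduct, sq] using Finset.sum_mul_sq_le_sq_mul_sq Finset.univ v w

theorem trace_transpose_mul_self_nonneg (A : Matrix m n R) : 0 ≤ trace (Aᵀ * A) := by
  rw [← trace_transpose_mul, transpose_transpose, trace_mul_transpose_eq_sum_dotProduct]
  exact Finset.sum_nonneg fun i _ => dotProduct_self_nonneg (A i)

theorem dotProduct_self_mulVec_le (A : Matrix m n R) (x : n → R) :
    (A *ᵥ x) ⬝ᵥ (A *ᵥ x) ≤ trace (A * Aᵀ) * (x ⬝ᵥ x) := by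
  rw [trace_mul_transpose_eq_sum_dotProduct, Finset.sum_mul]
  change ∑ i, (A i ⬝ᵥ x) * (A i ⬝ᵥ x) ≤ _
  simp only [← sq]
  exact Finset.sum_le_sum fun i _ => sq_dotProduct_le (A i) x

theorem dotProduct_self_sub_transpose_mul_mulVec_le [DecidableEq n] {A : Matrix m n R}
    (hA : trace (Aᵀ * A) ≤ 1) (x : n → R) :
    ((1 - Aᵀ * A) *ᵥ x) ⬝ᵥ ((1 - Aᵀ * A) *ᵥ x) ≤ x ⬝ᵥ x - (A *ᵥ x) ⬝ᵥ (A *ᵥ x) := by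
  set y := A *ᵥ x
  have hstep : (1 - Aᵀ * A) *ᵥ x = x - Aᵀ *ᵥ y := by
    rw [sub_mulVec, one_mulVec, ← mulVec_mulVec]
  have hcross : x ⬝ᵥ (Aᵀ *ᵥ y) = y ⬝ᵥ y := by
    rw [dotProduct_mulVec, vecMul_transpose, dotProduct_comm]
  have hback : (Aᵀ *ᵥ y) ⬝ᵥ (Aᵀ *ᵥ y) ≤ y ⬝ᵥ y :=
    calc (Aᵀ *ᵥ y) ⬝ᵥ (Aᵀ *ᵥ y) ≤ trace (Aᵀ * A) * (y ⬝ᵥ y) := by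
          simpa only [transpose_transpose] using dotProduct_self_mulVec_le Aᵀ y
      _ ≤ y ⬝ᵥ y := mul_le_of_le_one_left (dotProduct_self_nonneg y) hA
  rw [hstep, sub_dotProduct, dotProduct_sub, dotProduct_sub, hcross, dotProduct_comm (Aᵀ *ᵥ y) x,
    hcross]
  linarith

end OrderedRing

theorem trace_transpose_mul_self_lt_one_of_eq_inv_sqrt_smul {m n : Type*} [Fintype m] [Fintype n]
    {Γ γ : Matrix m n ℝ} (hγ : γ = (Real.sqrt (1 + trace (Γᵀ * Γ)))⁻¹ • Γ) :
    trace (γᵀ * γ) < 1 := by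
  have hpos : 0 < 1 + trace (Γᵀ * Γ) := by linarith [trace_transpose_mul_self_nonneg Γ]
  rw [hγ, transpose_smul, Matrix.smul_mul, Matrix.mul_smul, smul_smul, trace_smul, smul_eq_mul,
    ← sq, inv_pow, Real.sq_sqrt hpos.le, inv_mul_lt_one₀ hpos]
  linarith

end Matrix

/-- One-step decrease of the Lyapunov function V_t = ‖ψ̃_t‖² along the error dynamics
ψ̃_{t+1} = (I − γ_tᵀγ_t) ψ̃_t, where γ_t = Γ_t / √(1 + tr(Γ_tᵀΓ_t)). -/
theorem lyapunov_decrease {r h : ℕ} (Γ γ : ℕ → Matrix (Fin r) (Fin h) ℝ)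
    (ψ : ℕ → Fin h → ℝ)
    (hγ : ∀ t, γ t = (Real.sqrt (1 + Matrix.trace ((Γ t)ᵀ * Γ t)))⁻¹ • Γ t)
    (hdyn : ∀ t, ψ (t + 1) = ((1 : Matrix (Fin h) (Fin h) ℝ) - (γ t)ᵀ * γ t) *ᵥ ψ t) :
    ∀ t, (∑ i, (ψ (t + 1) i) ^ 2) - (∑ i, (ψ t i) ^ 2) ≤ - ∑ j, ((γ t *ᵥ ψ t) j) ^ 2 := by
  intro t
  have hstep := dotProduct_self_sub_transpose_mul_mulVec_le
    (trace_transpose_mul_self_lt_one_of_eq_inv_sqrt_smul (hγ t)).le (ψ t)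
  rw [← hdyn t] at hstep
  simp only [dotProduct, ← sq] at hstep
  linarith
end

section
/- Let S_t be bounded uniformly (‖S_t‖ ≤ B_S), W_t bounded (‖W_t‖ ≤ B_W), S_T positive definite with λ_min(S_TᵀS_T) = μ > 0, and define γ_t = Γ_t / sqrt(1 + tr(Γ_tᵀΓ_t)) with Γ_t as the stacked regressor including the κ₃ S_T block. Then there exists κ > 0 (depending on μ, B_S, B_W, κ₁, κ₂, κ₃) such that λ_min(γ_tᵀγ_t) ≥ κ for all t. -/
/-!
Write `G = ΓᵀΓ`. The `κ₃ S_TᵀS_T` block gives `G ⪰ κ₃μ I`, and the norm bounds on `W` and `S`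
give `tr G ≤ D := κ₁B_W² + κ₂B_S² + κ₃ tr(S_TᵀS_T)` uniformly in `t`. Normalising by
`√(1 + tr G)` turns `G` into `(1 + tr G)⁻¹ G ⪰ (1 + D)⁻¹ G ⪰ κ₃μ/(1 + D) I`.
-/

open Matrix

namespace Matrix

variable {m n : Type*} [Fintype m]

theorem posSemidef_transpose_mul_self [Fintype n] (A : Matrix m n ℝ) : (Aᵀ * A).PosSemidef := by
  simpa only [conjTranspose_eq_transpose_of_trivial] using posSemidef_conjTranspose_mul_self A

theorem trace_transpose_mul_self [Fintype n] (A : Matrix m n ℝ) :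
    (Aᵀ * A).trace = ∑ i, ∑ j, A i j ^ 2 := by
  rw [Finset.sum_comm]
  simp [trace, mul_apply, sq]

theorem transpose_mul_self_inv_sqrt_smul (A : Matrix m n ℝ) {c : ℝ} (hc : 0 ≤ c) :
    ((√c)⁻¹ • A)ᵀ * ((√c)⁻¹ • A) = c⁻¹ • (Aᵀ * A) := by
  rw [transpose_smul, smul_mul, Matrix.mul_smul, smul_smul, ← mul_inv, Real.mul_self_sqrt hc]

theorem PosSemidef.smul_sub_smul_one [DecidableEq n] {G : Matrix n n ℝ} {a b c : ℝ}
    (hG : (G - a • 1).PosSemidef) (hc : 0 ≤ c) (hb : b ≤ c * a) :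
    (c • G - b • 1).PosSemidef := by
  have hsplit : c • G - b • 1 = c • (G - a • 1) + (c * a - b) • (1 : Matrix n n ℝ) := by
    rw [smul_sub, smul_smul, sub_smul]
    abel
  rw [hsplit]
  exact (hG.smul hc).add (PosSemidef.one.smul (sub_nonneg.2 hb))

theorem PosSemidef.inv_one_add_trace_smul_sub [Fintype n] [DecidableEq n] {G : Matrix n n ℝ}
    {a D : ℝ} (ha : 0 ≤ a) (hG : (G - a • 1).PosSemidef) (hD : G.trace ≤ D) :
    ((1 + G.trace)⁻¹ • G - (a / (1 + D)) • 1).PosSemidef := by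
  have htrace : 0 ≤ G.trace := by
    simpa using (hG.add (PosSemidef.one.smul ha)).trace_nonneg
  refine hG.smul_sub_smul_one (by positivity) ?_
  rw [div_eq_inv_mul]
  gcongr

end Matrix

theorem uniform_eigenvalue_lower_bound_general {k h r : ℕ} (κ₁ κ₂ κ₃ BW BS μ : ℝ)
    (hκ₁ : 0 < κ₁) (hκ₂ : 0 < κ₂) (hκ₃ : 0 < κ₃) (hμ : 0 < μ)
    (W : ℕ → Matrix (Fin k) (Fin h) ℝ) (S : ℕ → Matrix (Fin h) (Fin h) ℝ)
    (ST : Matrix (Fin h) (Fin h) ℝ)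
    (Γ γ : ℕ → Matrix (Fin r) (Fin h) ℝ)
    (hWbdd : ∀ t, (∑ i, ∑ j, (W t i j) ^ 2) ≤ BW ^ 2)
    (hSbdd : ∀ t, (∑ i, ∑ j, (S t i j) ^ 2) ≤ BS ^ 2)
    (hSTμ : (STᵀ * ST - μ • (1 : Matrix (Fin h) (Fin h) ℝ)).PosSemidef)
    (hΓ : ∀ t, (Γ t)ᵀ * Γ t =
      κ₁ • ((W (t + 1))ᵀ * W (t + 1)) + κ₂ • ((S (t + 1))ᵀ * S (t + 1)) + κ₃ • (STᵀ * ST))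
    (hγ : ∀ t, γ t = (Real.sqrt (1 + Matrix.trace ((Γ t)ᵀ * Γ t)))⁻¹ • Γ t) :
    ∃ κ : ℝ, 0 < κ ∧ ∀ t,
      ((γ t)ᵀ * γ t - κ • (1 : Matrix (Fin h) (Fin h) ℝ)).PosSemidef := by
  set D := κ₁ * BW ^ 2 + κ₂ * BS ^ 2 + κ₃ * (STᵀ * ST).trace
  have hD : 0 ≤ D := by
    have := (posSemidef_transpose_mul_self ST).trace_nonneg
    positivity
  refine ⟨κ₃ * μ / (1 + D), div_pos (mul_pos hκ₃ hμ) (by linarith), fun t => ?_⟩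
  have hlower : ((Γ t)ᵀ * Γ t - (κ₃ * μ) • 1).PosSemidef := by
    rw [hΓ t, add_sub_assoc, mul_smul, ← smul_sub]
    exact (((posSemidef_transpose_mul_self _).smul hκ₁.le).add
      ((posSemidef_transpose_mul_self _).smul hκ₂.le)).add (hSTμ.smul hκ₃.le)
  have htrace : ((Γ t)ᵀ * Γ t).trace ≤ D := by
    rw [hΓ t, trace_add, trace_add, trace_smul, trace_smul, trace_smul,
      trace_transpose_mul_self, trace_transpose_mul_self, smul_eq_mul, smul_eq_mul, smul_eq_mul]
    exact add_le_add_left (add_le_add (mul_le_mul_of_nonneg_left (hWbdd _) hκ₁.le)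
      (mul_le_mul_of_nonneg_left (hSbdd _) hκ₂.le)) _
  have hnonneg : 0 ≤ 1 + ((Γ t)ᵀ * Γ t).trace := by
    linarith [(posSemidef_transpose_mul_self (Γ t)).trace_nonneg]
  rw [hγ t, transpose_mul_self_inv_sqrt_smul _ hnonneg]
  exact hlower.inv_one_add_trace_smul_sub (by positivity) htrace

/-- Under uniform boundedness of W and S and positive definiteness of S_T, the normalized
stacked-regressor Gramian γ_tᵀγ_t admits a uniform positive lower eigenvalue bound. -/
theorem uniform_eigenvalue_lower_bound {k h r : ℕ} (κ₁ κ₂ κ₃ BW BS μ : ℝ)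
    (hκ₁ : 0 < κ₁) (hκ₂ : 0 < κ₂) (hκ₃ : 0 < κ₃) (hμ : 0 < μ)
    (W : ℕ → Matrix (Fin k) (Fin h) ℝ) (S : ℕ → Matrix (Fin h) (Fin h) ℝ)
    (ST : Matrix (Fin h) (Fin h) ℝ)
    (Γ γ : ℕ → Matrix (Fin r) (Fin h) ℝ)
    (hWbdd : ∀ t, (∑ i, ∑ j, (W t i j) ^ 2) ≤ BW ^ 2)
    (hSbdd : ∀ t, (∑ i, ∑ j, (S t i j) ^ 2) ≤ BS ^ 2)
    (hSTpd : ST.PosDef)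
    (hSTμ : (STᵀ * ST - μ • (1 : Matrix (Fin h) (Fin h) ℝ)).PosSemidef)
    (hΓ : ∀ t, (Γ t)ᵀ * Γ t =
      κ₁ • ((W (t + 1))ᵀ * W (t + 1)) + κ₂ • ((S (t + 1))ᵀ * S (t + 1)) + κ₃ • (STᵀ * ST))
    (hγ : ∀ t, γ t = (Real.sqrt (1 + Matrix.trace ((Γ t)ᵀ * Γ t)))⁻¹ • Γ t) :
    ∃ κ : ℝ, 0 < κ ∧ ∀ t,
      ((γ t)ᵀ * γ t - κ • (1 : Matrix (Fin h) (Fin h) ℝ)).PosSemidef :=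
  uniform_eigenvalue_lower_bound_general κ₁ κ₂ κ₃ BW BS μ hκ₁ hκ₂ hκ₃ hμ W S ST Γ γ hWbdd hSbdd hSTμ
    hΓ hγ
end
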